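/- arXiv:1910.14593 — 4 statements merged into one kernel-verified Lean document; each statement's English description precedes it below -/
import Mathlib

section
/- Let q > 1. For every sequence (a_k) of nonnegative reals with a_1 = 1, a_k ≤ 1 for all k, and Σ_k a_k < ∞, define G_q(a) = (1 + Σ_{k≥2} a_k^3)^q / (1 + Σ_{k≥2} a_k)^{3q-2}. Then G_q(a) ≤ 1, with equality if and only if a_k = 0 for all k ≥ 2. -/
/-- One-dimensional case: for `q > 1` and a sequence `(a_k)_{k≥2} ⊂ [0,1]` (indexed by ℕ)
with summable sum, `G_q(a) = (1 + Σ a_k³)^q / (1 + Σ a_k)^{3q-2} ≤ 1`,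
with equality iff `a_k = 0` for all `k`. -/
theorem Gq_le_one (q : ℝ) (hq : 1 < q) (a : ℕ → ℝ)
    (ha : ∀ k, a k ∈ Set.Icc (0 : ℝ) 1) (hsum : Summable a) :
    (1 + ∑' k, a k ^ 3) ^ q / (1 + ∑' k, a k) ^ (3 * q - 2) ≤ 1 ∧
    ((1 + ∑' k, a k ^ 3) ^ q / (1 + ∑' k, a k) ^ (3 * q - 2) = 1 ↔ ∀ k, a k = 0) := by
  have h3le : ∀ k, a k ^ 3 ≤ a k := fun k =>
    pow_le_of_le_one (ha k).1 (ha k).2 (by norm_num)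
  have hsum3 : Summable (fun k => a k ^ 3) :=
    hsum.of_nonneg_of_le (fun k => pow_nonneg (ha k).1 3) h3le
  have hS3 : (0:ℝ) ≤ ∑' k, a k ^ 3 := tsum_nonneg fun k => pow_nonneg (ha k).1 3
  have hS : (0:ℝ) ≤ ∑' k, a k := tsum_nonneg fun k => (ha k).1
  have hS3S : (∑' k, a k ^ 3) ≤ ∑' k, a k := Summable.tsum_le_tsum h3le hsum3 hsum
  have hq' : q ≤ 3 * q - 2 := by linarith
  have h1S : (1:ℝ) ≤ 1 + ∑' k, a k := by linarith
  have hden : (0:ℝ) < (1 + ∑' k, a k) ^ (3 * q - 2) :=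
    Real.rpow_pos_of_pos (by linarith) _
  have hle : (1 + ∑' k, a k ^ 3) ^ q ≤ (1 + ∑' k, a k) ^ (3 * q - 2) := by
    calc (1 + ∑' k, a k ^ 3) ^ q ≤ (1 + ∑' k, a k) ^ q :=
          Real.rpow_le_rpow (by linarith) (by linarith) (by linarith)
      _ ≤ (1 + ∑' k, a k) ^ (3 * q - 2) :=
          Real.rpow_le_rpow_of_exponent_le h1S hq'
  refine ⟨(div_le_one hden).2 hle, ?_, ?_⟩
  · intro h
    by_contra hne
    push_neg at hne
    obtain ⟨k, hk⟩ := hne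
    have hak : 0 < a k := lt_of_le_of_ne (ha k).1 (Ne.symm hk)
    have hSpos : 0 < ∑' k, a k :=
      lt_of_lt_of_le hak (Summable.le_tsum hsum k fun j _ => (ha j).1)
    have hlt : (1 + ∑' k, a k ^ 3) ^ q < (1 + ∑' k, a k) ^ (3 * q - 2) := by
      calc (1 + ∑' k, a k ^ 3) ^ q ≤ (1 + ∑' k, a k) ^ q :=
            Real.rpow_le_rpow (by linarith) (by linarith) (by linarith)
        _ < (1 + ∑' k, a k) ^ (3 * q - 2) :=
            Real.rpow_lt_rpow_of_exponent_lt (by linarith) (by linarith)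
    have : (1 + ∑' k, a k ^ 3) ^ q / (1 + ∑' k, a k) ^ (3 * q - 2) < 1 :=
      (div_lt_one hden).2 hlt
    linarith [this, h.ge]
  · intro h
    have h0 : (∑' k, a k) = 0 := by
      simp [h]
    have h03 : (∑' k, a k ^ 3) = 0 := by
      simp [h]
    rw [h0, h03]
    norm_num
end

section
/- Let q > 2/3. For ε ∈ (0,1] choose N = N(ε) with ε^{-2} ≤ N < ε^{-2} + 1 (more generally ε^{-1} ≪ N ≪ ε^{-3}). Then G_q(a) = (1 + N ε^3)^q / (1 + N ε)^{3q-2}, for the sequence with a_1 = 1 and a_k = ε for 2 ≤ k ≤ N+1, tends to 0 as ε → 0. Consequently inf G_q = 0 over all admissible sequences. -/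
open Filter

private lemma Gq_tendsto (q : ℝ) (hq : 2 / 3 < q) (N : ℝ → ℕ)
    (hN : ∀ ε ∈ Set.Ioc (0 : ℝ) 1, (ε ^ 2)⁻¹ ≤ (N ε : ℝ) ∧ (N ε : ℝ) < (ε ^ 2)⁻¹ + 1) :
    Tendsto (fun ε : ℝ => (1 + (N ε : ℝ) * ε ^ 3) ^ q / (1 + (N ε : ℝ) * ε) ^ (3 * q - 2))
      (nhdsWithin 0 (Set.Ioi 0)) (nhds 0) := by
  have hq0 : (0:ℝ) ≤ q := le_of_lt (lt_trans (by norm_num) hq)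
  have hc : (0:ℝ) < 3 * q - 2 := by linarith
  have hIoc : Set.Ioc (0:ℝ) 1 ∈ nhdsWithin (0:ℝ) (Set.Ioi 0) :=
    Ioc_mem_nhdsGT_of_mem ⟨le_refl 0, one_pos⟩
  have hupper : ∀ᶠ ε in nhdsWithin (0:ℝ) (Set.Ioi 0),
      (1 + (N ε : ℝ) * ε ^ 3) ^ q / (1 + (N ε : ℝ) * ε) ^ (3 * q - 2)
        ≤ 3 ^ q * ε ^ (3 * q - 2) := by
    filter_upwards [hIoc] with ε hε
    obtain ⟨h1, h2⟩ := hN ε hε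
    obtain ⟨hε0, hε1⟩ := hε
    have hεne : ε ≠ 0 := ne_of_gt hε0
    have key1 : ((ε ^ 2)⁻¹ + 1) * ε ^ 3 = ε + ε ^ 3 := by field_simp
    have key2 : (ε ^ 2)⁻¹ * ε = ε⁻¹ := by field_simp
    have hA : 1 + (N ε : ℝ) * ε ^ 3 ≤ 3 := by
      have h3 : (N ε : ℝ) * ε ^ 3 < ((ε ^ 2)⁻¹ + 1) * ε ^ 3 :=
        mul_lt_mul_of_pos_right h2 (by positivity)
      have hεc : ε ^ 3 ≤ 1 := pow_le_one₀ hε0.le hε1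
      nlinarith
    have hB : ε⁻¹ ≤ 1 + (N ε : ℝ) * ε := by
      have h3 : (ε ^ 2)⁻¹ * ε ≤ (N ε : ℝ) * ε := mul_le_mul_of_nonneg_right h1 hε0.le
      have hNn : (0:ℝ) ≤ (N ε : ℝ) := Nat.cast_nonneg _
      nlinarith
    have hd : (0:ℝ) < (ε⁻¹) ^ (3 * q - 2) := Real.rpow_pos_of_pos (inv_pos.mpr hε0) _
    have hnum : (1 + (N ε : ℝ) * ε ^ 3) ^ q ≤ 3 ^ q :=
      Real.rpow_le_rpow (by positivity) hA hq0
    have hden : (ε⁻¹) ^ (3 * q - 2) ≤ (1 + (N ε : ℝ) * ε) ^ (3 * q - 2) :=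
      Real.rpow_le_rpow (by positivity) hB hc.le
    calc (1 + (N ε : ℝ) * ε ^ 3) ^ q / (1 + (N ε : ℝ) * ε) ^ (3 * q - 2)
        ≤ 3 ^ q / (ε⁻¹) ^ (3 * q - 2) := by
          apply div_le_div₀ (by positivity) hnum hd hden
      _ = 3 ^ q * ε ^ (3 * q - 2) := by
          rw [Real.inv_rpow hε0.le]
          field_simp
  have hlower : ∀ᶠ ε in nhdsWithin (0:ℝ) (Set.Ioi 0),
      (0:ℝ) ≤ (1 + (N ε : ℝ) * ε ^ 3) ^ q / (1 + (N ε : ℝ) * ε) ^ (3 * q - 2) := by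
    filter_upwards [hIoc] with ε hε
    have hε0 := hε.1
    positivity
  have hrpow : Tendsto (fun ε : ℝ => ε ^ (3 * q - 2)) (nhds 0) (nhds 0) := by
    have := (Real.continuousAt_rpow_const 0 (3 * q - 2) (Or.inr hc.le)).tendsto
    simpa [Real.zero_rpow hc.ne'] using this
  have hlim : Tendsto (fun ε : ℝ => (3:ℝ) ^ q * ε ^ (3 * q - 2))
      (nhdsWithin 0 (Set.Ioi 0)) (nhds 0) := by
    have := (hrpow.const_mul ((3:ℝ) ^ q)).mono_left (nhdsWithin_le_nhds (s := Set.Ioi 0))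
    simpa using this
  exact tendsto_of_tendsto_of_tendsto_of_le_of_le' tendsto_const_nhds hlim hlower hupper

/-- For `q > 2/3`, with `N = N(ε)` satisfying `ε⁻² ≤ N < ε⁻² + 1`, the quantity
`(1 + Nε³)^q / (1 + Nε)^{3q-2}` tends to `0` as `ε → 0⁺`; consequently the infimum
of `G_q` over admissible sequences is `0`. -/
theorem inf_Gq_eq_zero (q : ℝ) (hq : 2 / 3 < q) :
    (∀ N : ℝ → ℕ, (∀ ε ∈ Set.Ioc (0 : ℝ) 1, (ε ^ 2)⁻¹ ≤ (N ε : ℝ) ∧ (N ε : ℝ) < (ε ^ 2)⁻¹ + 1) →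
      Tendsto (fun ε : ℝ => (1 + (N ε : ℝ) * ε ^ 3) ^ q / (1 + (N ε : ℝ) * ε) ^ (3 * q - 2))
        (nhdsWithin 0 (Set.Ioi 0)) (nhds 0)) ∧
    sInf {x : ℝ | ∃ a : ℕ → ℝ, (∀ k, a k ∈ Set.Icc (0 : ℝ) 1) ∧ Summable a ∧
      x = (1 + ∑' k, a k ^ 3) ^ q / (1 + ∑' k, a k) ^ (3 * q - 2)} = 0 := by
  refine ⟨fun N hN => Gq_tendsto q hq N hN, ?_⟩
  set S := {x : ℝ | ∃ a : ℕ → ℝ, (∀ k, a k ∈ Set.Icc (0 : ℝ) 1) ∧ Summable a ∧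
      x = (1 + ∑' k, a k ^ 3) ^ q / (1 + ∑' k, a k) ^ (3 * q - 2)} with hSdef
  have hS0 : ∀ x ∈ S, (0:ℝ) ≤ x := by
    rintro x ⟨a, ha, hsum, rfl⟩
    have h1 : (0:ℝ) ≤ 1 + ∑' k, a k ^ 3 := by
      have : (0:ℝ) ≤ ∑' k, a k ^ 3 := tsum_nonneg fun k => pow_nonneg (ha k).1 3
      linarith
    have h2 : (0:ℝ) ≤ 1 + ∑' k, a k := by
      have : (0:ℝ) ≤ ∑' k, a k := tsum_nonneg fun k => (ha k).1
      linarith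
    positivity
  have hne : (1:ℝ) ∈ S := by
    refine ⟨fun _ => 0, fun k => ⟨le_refl 0, zero_le_one⟩, summable_zero, ?_⟩
    simp [Real.one_rpow]
  refine le_antisymm ?_ (le_csInf ⟨1, hne⟩ hS0)
  rw [Real.sInf_le_iff ⟨0, hS0⟩ ⟨1, hne⟩]
  intro δ hδ
  have ht := Gq_tendsto q hq (fun ε => ⌈(ε ^ 2)⁻¹⌉₊)
    (fun ε hε => ⟨Nat.le_ceil _, Nat.ceil_lt_add_one (inv_nonneg.2 (sq_nonneg ε))⟩)
  have hf : ∀ᶠ ε in nhdsWithin (0:ℝ) (Set.Ioi 0),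
      (1 + (⌈(ε ^ 2)⁻¹⌉₊ : ℝ) * ε ^ 3) ^ q / (1 + (⌈(ε ^ 2)⁻¹⌉₊ : ℝ) * ε) ^ (3 * q - 2) < δ :=
    ht (Iio_mem_nhds hδ)
  have hIoc : Set.Ioc (0:ℝ) 1 ∈ nhdsWithin (0:ℝ) (Set.Ioi 0) :=
    Ioc_mem_nhdsGT_of_mem ⟨le_refl 0, one_pos⟩
  obtain ⟨ε, hfε, hε0, hε1⟩ := (hf.and (eventually_of_mem hIoc fun x hx => hx)).exists
  set n := ⌈(ε ^ 2)⁻¹⌉₊ with hn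
  set a : ℕ → ℝ := fun k => if k < n then ε else 0 with ha
  have hz : ∀ b ∉ Finset.range n, a b = 0 := by
    intro b hb
    simp only [Finset.mem_range] at hb
    simp [ha, hb]
  have hsum : ∑' k, a k = (n:ℝ) * ε := by
    have h : ∀ k ∈ Finset.range n, a k = ε := fun k hk => by
      simp [ha, Finset.mem_range.mp hk]
    rw [tsum_eq_sum hz, Finset.sum_congr rfl h]
    simp [mul_comm]
  have hz3 : ∀ b ∉ Finset.range n, a b ^ 3 = 0 := by
    intro b hb; rw [hz b hb]; ring
  have hsum3 : ∑' k, a k ^ 3 = (n:ℝ) * ε ^ 3 := by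
    have h : ∀ k ∈ Finset.range n, a k ^ 3 = ε ^ 3 := fun k hk => by
      simp [ha, Finset.mem_range.mp hk]
    rw [tsum_eq_sum hz3, Finset.sum_congr rfl h]
    simp [mul_comm]
  refine ⟨_, ⟨a, ?_, summable_of_ne_finset_zero hz, rfl⟩, ?_⟩
  · intro k
    by_cases h : k < n <;> simp [ha, h, hε0.le, hε1, Set.mem_Icc]
  · rw [hsum, hsum3]
    simpa using hfε
end

section
/- Let d ≥ 1, q > 2/(d+2), and let B be a ball in R^d. For N ∈ N and ε ∈ (0,1] with ε^{-d-2} ≤ N < ε^{-d-2} + 1, the quantity F(ε) = (1 + N ε^{d+2})^q / (1 + N ε^d)^{(dq+2q-2)/d} satisfies F(ε) ≤ 3^q / (1 + ε^{-2})^{(dq+2q-2)/d}, and F(ε) → 0 as ε → 0. -/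
open Filter

private lemma key_bound (d : ℕ) (hd : 1 ≤ d) (q : ℝ) (hq : 2 / ((d : ℝ) + 2) < q)
    (ε : ℝ) (hε : ε ∈ Set.Ioc (0 : ℝ) 1) (N : ℕ)
    (h1 : (ε ^ (d + 2))⁻¹ ≤ (N : ℝ)) (h2 : (N : ℝ) < (ε ^ (d + 2))⁻¹ + 1) :
    (1 + (N : ℝ) * ε ^ (d + 2)) ^ q / (1 + (N : ℝ) * ε ^ d) ^ (((d : ℝ) * q + 2 * q - 2) / d)
        ≤ (3 : ℝ) ^ q / (1 + (ε ^ 2)⁻¹) ^ (((d : ℝ) * q + 2 * q - 2) / d) := by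
  obtain ⟨hε0, hε1⟩ := hε
  have hεp : (0 : ℝ) < ε ^ (d + 2) := by positivity
  have hq0 : 0 < q := lt_trans (by positivity) hq
  have hα : 0 < ((d : ℝ) * q + 2 * q - 2) / d := by
    have hd0 : (0 : ℝ) < d := by exact_mod_cast hd
    have : 2 < ((d : ℝ) + 2) * q := by
      rw [div_lt_iff₀ (by positivity)] at hq; linarith
    apply div_pos _ hd0; nlinarith
  -- numerator bound
  have hnum : 1 + (N : ℝ) * ε ^ (d + 2) ≤ 3 := by
    have : (N : ℝ) * ε ^ (d + 2) ≤ ((ε ^ (d + 2))⁻¹ + 1) * ε ^ (d + 2) :=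
      mul_le_mul_of_nonneg_right (le_of_lt h2) (le_of_lt hεp)
    have heq : ((ε ^ (d + 2))⁻¹ + 1) * ε ^ (d + 2) = 1 + ε ^ (d + 2) := by
      field_simp
    have hle1 : ε ^ (d + 2) ≤ 1 := pow_le_one₀ (le_of_lt hε0) hε1
    nlinarith
  -- denominator bound
  have hden : 1 + (ε ^ 2)⁻¹ ≤ 1 + (N : ℝ) * ε ^ d := by
    have h : (ε ^ (d + 2))⁻¹ * ε ^ d ≤ (N : ℝ) * ε ^ d :=
      mul_le_mul_of_nonneg_right h1 (by positivity)
    have heq : (ε ^ (d + 2))⁻¹ * ε ^ d = (ε ^ 2)⁻¹ := by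
      rw [pow_add]
      field_simp
    linarith [heq ▸ h]
  have hdenp : (0 : ℝ) < 1 + (ε ^ 2)⁻¹ := by positivity
  have hnum0 : (0 : ℝ) ≤ 1 + (N : ℝ) * ε ^ (d + 2) := by positivity
  apply div_le_div₀ (by positivity)
  · exact Real.rpow_le_rpow hnum0 hnum (le_of_lt hq0)
  · exact Real.rpow_pos_of_pos hdenp _
  · exact Real.rpow_le_rpow (le_of_lt hdenp) hden (le_of_lt hα)

/-- For `d ≥ 1`, `q > 2/(d+2)`: if `ε ∈ (0,1]` and `N ∈ ℕ` satisfy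
`ε^{-(d+2)} ≤ N < ε^{-(d+2)} + 1`, then
`F(ε) = (1 + Nε^{d+2})^q / (1 + Nε^d)^{(dq+2q-2)/d} ≤ 3^q / (1 + ε⁻²)^{(dq+2q-2)/d}`,
and `F(ε) → 0` as `ε → 0⁺`. -/
theorem inf_Fq_zero_computation (d : ℕ) (hd : 1 ≤ d) (q : ℝ) (hq : 2 / ((d : ℝ) + 2) < q) :
    (∀ ε ∈ Set.Ioc (0 : ℝ) 1, ∀ N : ℕ,
      (ε ^ (d + 2))⁻¹ ≤ (N : ℝ) → (N : ℝ) < (ε ^ (d + 2))⁻¹ + 1 →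
      (1 + (N : ℝ) * ε ^ (d + 2)) ^ q / (1 + (N : ℝ) * ε ^ d) ^ (((d : ℝ) * q + 2 * q - 2) / d)
        ≤ (3 : ℝ) ^ q / (1 + (ε ^ 2)⁻¹) ^ (((d : ℝ) * q + 2 * q - 2) / d)) ∧
    (∀ N : ℝ → ℕ, (∀ ε ∈ Set.Ioc (0 : ℝ) 1,
        (ε ^ (d + 2))⁻¹ ≤ (N ε : ℝ) ∧ (N ε : ℝ) < (ε ^ (d + 2))⁻¹ + 1) →
      Tendsto (fun ε : ℝ =>
          (1 + (N ε : ℝ) * ε ^ (d + 2)) ^ q /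
            (1 + (N ε : ℝ) * ε ^ d) ^ (((d : ℝ) * q + 2 * q - 2) / d))
        (nhdsWithin 0 (Set.Ioi 0)) (nhds 0)) := by
  constructor
  · exact fun ε hε N h1 h2 => key_bound d hd q hq ε hε N h1 h2
  · intro N hN
    have hα : 0 < ((d : ℝ) * q + 2 * q - 2) / d := by
      have hd0 : (0 : ℝ) < d := by exact_mod_cast hd
      have : 2 < ((d : ℝ) + 2) * q := by
        rw [div_lt_iff₀ (by positivity)] at hq; linarith
      apply div_pos _ hd0; nlinarith
    have hmem : Set.Ioc (0 : ℝ) 1 ∈ nhdsWithin (0 : ℝ) (Set.Ioi 0) :=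
      Ioc_mem_nhdsGT_of_mem (by simp : (0:ℝ) ∈ Set.Ico (0:ℝ) 1)
    -- upper bound function tends to 0
    have hup : Tendsto (fun ε : ℝ => (3 : ℝ) ^ q / (1 + (ε ^ 2)⁻¹) ^ (((d : ℝ) * q + 2 * q - 2) / d))
        (nhdsWithin 0 (Set.Ioi 0)) (nhds 0) := by
      apply Tendsto.div_atTop tendsto_const_nhds
      apply (tendsto_rpow_atTop hα).comp
      apply tendsto_atTop_add_const_left
      have h2 : Tendsto (fun ε : ℝ => (ε ^ 2)⁻¹) (nhdsWithin 0 (Set.Ioi 0)) atTop := by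
        apply tendsto_inv_nhdsGT_zero.comp
        rw [tendsto_nhdsWithin_iff]
        constructor
        · exact ((continuous_pow 2).tendsto' 0 0 (by norm_num)).mono_left nhdsWithin_le_nhds
        · filter_upwards [self_mem_nhdsWithin] with x hx using Set.mem_Ioi.2 (pow_pos hx 2)
      exact h2
    refine tendsto_of_tendsto_of_tendsto_of_le_of_le' tendsto_const_nhds hup ?_ ?_
    · filter_upwards [hmem] with ε hε
      obtain ⟨h0, h1⟩ := hε
      positivity
    · filter_upwards [hmem] with ε hε
      exact key_bound d hd q hq ε hε (N ε) (hN ε hε).1 (hN ε hε).2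
end

section
/- Let A ⊂ R^{d-1} be a bounded convex body and h : A → [0,∞) a concave function with sup_A h = 1. Then ∫_A h^3(x) dx ≥ (6/((d+1)(d+2))) ∫_A h(x) dx. -/
/-!
Write `n = d - 1` and `J k = ∫_A h ^ k`. For `p ∈ A` and `0 < s < 1` the homothety
`x ↦ s • x + (1 - s) • p` maps `A` into itself, and concavity gives
`s * h x + (1 - s) * h p ≤ h (s • x + (1 - s) • p)`; the change of variables therefore yields
`s ^ n * ∫_A (s * h + (1 - s) * h p) ^ (k + 1) ≤ J (k + 1)`. Keeping the first two binomial terms,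
dividing by `1 - s` and letting `s → 1` gives `(k + 1) * h p * J k ≤ (n + k + 1) * J (k + 1)`, and
letting `h p` approach `sup h = 1` gives `2 J 1 ≤ (d + 1) J 2` and `3 J 2 ≤ (d + 2) J 3`.
-/

open MeasureTheory Set Module

theorem pow_add_succ_mul_pow_mul_le_add_pow {x y : ℝ} (hx : 0 ≤ x) (hy : 0 ≤ y) (k : ℕ) :
    x ^ (k + 1) + (k + 1) * x ^ k * y ≤ (x + y) ^ (k + 1) := by
  induction k with
  | zero => simp
  | succ k ih =>
    have hexpand : (x + y) * (x ^ (k + 1) + (k + 1) * x ^ k * y)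
        = x ^ (k + 2) + (k + 2) * x ^ (k + 1) * y + (k + 1) * x ^ k * y ^ 2 := by ring
    have hrest : 0 ≤ (k + 1) * x ^ k * y ^ 2 := by positivity
    calc x ^ (k + 1 + 1) + ((k + 1 : ℕ) + 1) * x ^ (k + 1) * y
        ≤ (x + y) * (x ^ (k + 1) + (k + 1) * x ^ k * y) := by push_cast; linarith
      _ ≤ (x + y) * (x + y) ^ (k + 1) := by gcongr
      _ = (x + y) ^ (k + 1 + 1) := by ring

theorem le_of_forall_mul_le_of_sSup_eq_one {S : Set ℝ} (hS : sSup S = 1) {a b : ℝ} (hb : 0 ≤ b)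
    (h : ∀ t ∈ S, t * a ≤ b) : a ≤ b := by
  rcases le_or_gt a 0 with ha | ha
  · linarith
  have hne : S.Nonempty := by
    by_contra hempty
    rw [not_nonempty_iff_eq_empty.1 hempty, Real.sSup_empty] at hS
    exact zero_ne_one hS
  have : sSup S ≤ b / a := csSup_le hne fun t ht => (le_div_iff₀ ha).2 (h t ht)
  rw [hS, le_div_iff₀ ha] at this
  linarith

theorem succ_mul_le_of_forall_pow_mul_le {n m : ℕ} {a b : ℝ} (hb : 0 ≤ b)
    (h : ∀ s ∈ Ioo (0 : ℝ) 1, s ^ n * (s ^ (m + 1) * b + (m + 1) * s ^ m * (1 - s) * a) ≤ b) :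
    (m + 1) * a ≤ (n + m + 1) * b := by
  have hlt : ∀ s ∈ Ioo (0 : ℝ) 1, (m + 1) * s ^ (n + m) * a ≤ (n + m + 1) * b := by
    rintro s ⟨hs0, hs1⟩
    have hbern := one_add_mul_sub_le_pow (show (-1 : ℝ) ≤ s by linarith) (n + m + 1)
    have hs := h s ⟨hs0, hs1⟩
    refine le_of_mul_le_mul_right ?_ (sub_pos.2 hs1)
    calc (m + 1) * s ^ (n + m) * a * (1 - s)
        = s ^ n * ((m + 1) * s ^ m * (1 - s) * a) := by ring
      _ ≤ (1 - s ^ (n + m + 1)) * b := by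
          have : s ^ n * (s ^ (m + 1) * b + (m + 1) * s ^ m * (1 - s) * a)
              = s ^ (n + m + 1) * b + s ^ n * ((m + 1) * s ^ m * (1 - s) * a) := by ring
          linarith
      _ ≤ (n + m + 1) * b * (1 - s) := by push_cast at hbern; nlinarith
  have hclosure : (1 : ℝ) ∈ closure (Ioo 0 1) := by
    rw [closure_Ioo zero_ne_one]; exact right_mem_Icc.2 zero_le_one
  simpa using le_on_closure hlt (by fun_prop) continuousOn_const hclosure

theorem IntegrableOn.comp_of_mapsTo_isCompact {α : Type*} [MeasurableSpace α] {μ : Measure α}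
    {A : Set α} {h : α → ℝ} {F : ℝ → ℝ} {K : Set ℝ} (hF : Continuous F) (hK : IsCompact K)
    (hhK : MapsTo h A K) (hh : AEStronglyMeasurable h (μ.restrict A))
    (hA : NullMeasurableSet A μ) (hμA : μ A ≠ ⊤) : IntegrableOn (fun x => F (h x)) A μ := by
  obtain ⟨C, hC⟩ := hK.exists_bound_of_continuousOn hF.continuousOn
  exact ⟨hF.comp_aestronglyMeasurable hh, .restrict_of_bounded C hμA.lt_top
    ((ae_restrict_mem₀ hA).mono fun x hx => hC _ (hhK hx))⟩

section AddHaar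

variable {E : Type*} [NormedAddCommGroup E] [NormedSpace ℝ E] [MeasurableSpace E] [BorelSpace E]
  [FiniteDimensional ℝ E] {μ : Measure E} [μ.IsAddHaarMeasure] {A : Set E}

theorem ConcaveOn.aestronglyMeasurable_restrict {h : E → ℝ} (hh : ConcaveOn ℝ A h) :
    AEStronglyMeasurable h (μ.restrict A) := by
  rw [← Measure.restrict_congr_set (interior_ae_eq_of_null_frontier (hh.1.addHaar_frontier μ))]
  exact hh.continuousOn_interior.aestronglyMeasurable isOpen_interior.measurableSet

theorem Convex.pow_finrank_mul_setIntegral_le (hA : Convex ℝ A) {p : E} (hp : p ∈ A) {s : ℝ}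
    (hs0 : 0 < s) (hs1 : s ≤ 1) {f g : E → ℝ} (hf : IntegrableOn f A μ) (hg : IntegrableOn g A μ)
    (hg0 : ∀ x ∈ A, 0 ≤ g x) (hfg : ∀ x ∈ A, f x ≤ g (s • x + (1 - s) • p)) :
    s ^ finrank ℝ E * ∫ x in A, f x ∂μ ≤ ∫ x in A, g x ∂μ := by
  have hAm : NullMeasurableSet A μ := hA.nullMeasurableSet μ
  set G := A.indicator g
  have hG0 : ∀ y, 0 ≤ G y := fun y => indicator_nonneg hg0 y
  have hGφ : Integrable (fun x => G (s • x + (1 - s) • p)) μ :=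
    ((hg.integrable_indicator₀ hAm).comp_add_right _).comp_smul hs0.ne'
  have hf_le : ∫ x in A, f x ∂μ ≤ ∫ x in A, G (s • x + (1 - s) • p) ∂μ := by
    refine setIntegral_mono_ae_restrict hf hGφ.integrableOn ((ae_restrict_mem₀ hAm).mono ?_)
    intro x hx
    have hmem : s • x + (1 - s) • p ∈ A := hA hx hp hs0.le (sub_nonneg.2 hs1) (add_sub_cancel s 1)
    simpa only [G, indicator_of_mem hmem] using hfg x hx
  have hrescale : ∫ x, G (s • x + (1 - s) • p) ∂μ = (s ^ finrank ℝ E)⁻¹ * ∫ x in A, g x ∂μ := by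
    rw [Measure.integral_comp_smul μ (fun y => G (y + (1 - s) • p)) s,
      integral_add_right_eq_self G, integral_indicator₀ hAm, abs_of_pos (by positivity),
      smul_eq_mul]
  calc s ^ finrank ℝ E * ∫ x in A, f x ∂μ
      ≤ s ^ finrank ℝ E * ∫ x, G (s • x + (1 - s) • p) ∂μ := by
        gcongr
        exact hf_le.trans (setIntegral_le_integral hGφ (.of_forall fun x => hG0 _))
    _ = ∫ x in A, g x ∂μ := by rw [hrescale]; field_simp

theorem ConcaveOn.succ_mul_mul_setIntegral_pow_le {h : E → ℝ} (hh : ConcaveOn ℝ A h)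
    (hμA : μ A ≠ ⊤) (h0 : ∀ x ∈ A, 0 ≤ h x) (hbdd : BddAbove (h '' A)) {p : E} (hp : p ∈ A)
    (k : ℕ) :
    (k + 1) * (h p * ∫ x in A, h x ^ k ∂μ)
      ≤ (finrank ℝ E + k + 1) * ∫ x in A, h x ^ (k + 1) ∂μ := by
  have hAm : NullMeasurableSet A μ := hh.1.nullMeasurableSet μ
  obtain ⟨M, hM⟩ := hbdd
  have hmaps : MapsTo h A (Icc 0 M) := fun x hx => ⟨h0 x hx, hM (mem_image_of_mem h hx)⟩
  have hpow : ∀ j : ℕ, IntegrableOn (fun x => h x ^ j) A μ := fun j =>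
    IntegrableOn.comp_of_mapsTo_isCompact (continuous_pow j) isCompact_Icc hmaps
      hh.aestronglyMeasurable_restrict hAm hμA
  refine succ_mul_le_of_forall_pow_mul_le
    (integral_nonneg_of_ae ((ae_restrict_mem₀ hAm).mono fun x hx => pow_nonneg (h0 x hx) _)) ?_
  rintro s ⟨hs0, hs1⟩
  have hlin : s ^ (k + 1) * ∫ x in A, h x ^ (k + 1) ∂μ
        + (k + 1) * s ^ k * (1 - s) * (h p * ∫ x in A, h x ^ k ∂μ)
      = ∫ x in A, (s ^ (k + 1) * h x ^ (k + 1) + (k + 1) * s ^ k * (1 - s) * h p * h x ^ k) ∂μ := by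
    rw [integral_add ((hpow _).const_mul _) ((hpow _).const_mul _), integral_const_mul,
      integral_const_mul]
    ring
  rw [hlin]
  refine hh.1.pow_finrank_mul_setIntegral_le hp hs0 hs1.le
    (((hpow _).const_mul _).add ((hpow _).const_mul _)) (hpow _)
    (fun x hx => pow_nonneg (h0 x hx) _) fun x hx => ?_
  have hconc : s * h x + (1 - s) * h p ≤ h (s • x + (1 - s) • p) := by
    simpa only [smul_eq_mul] using hh.2 hx hp hs0.le (sub_nonneg.2 hs1.le) (add_sub_cancel s 1)
  have hx0 := h0 x hx
  have hp0 := h0 p hp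
  calc s ^ (k + 1) * h x ^ (k + 1) + (k + 1) * s ^ k * (1 - s) * h p * h x ^ k
      = (s * h x) ^ (k + 1) + (k + 1) * (s * h x) ^ k * ((1 - s) * h p) := by ring
    _ ≤ (s * h x + (1 - s) * h p) ^ (k + 1) :=
      pow_add_succ_mul_pow_mul_le_add_pow (by positivity) (mul_nonneg (sub_nonneg.2 hs1.le) hp0) k
    _ ≤ h (s • x + (1 - s) • p) ^ (k + 1) := by gcongr

end AddHaar

theorem lower_thin_bound_general (d : ℕ) (hd : 2 ≤ d)
    (A : Set (EuclideanSpace ℝ (Fin (d - 1))))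
    (hbd : Bornology.IsBounded A)
    (h : EuclideanSpace ℝ (Fin (d - 1)) → ℝ) (hconc : ConcaveOn ℝ A h)
    (hnn : ∀ x ∈ A, 0 ≤ h x) (hsup : sSup (h '' A) = 1) :
    (6 / (((d : ℝ) + 1) * ((d : ℝ) + 2))) * (∫ x in A, h x) ≤ ∫ x in A, (h x) ^ 3 := by
  have hbdd : BddAbove (h '' A) := by
    by_contra hunbdd
    rw [Real.sSup_of_not_bddAbove hunbdd] at hsup
    exact zero_ne_one hsup
  have hdim : (finrank ℝ (EuclideanSpace ℝ (Fin (d - 1))) : ℝ) = d - 1 := by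
    rw [finrank_euclideanSpace_fin, Nat.cast_sub (by omega), Nat.cast_one]
  have hrec : ∀ k : ℕ, (k + 1) * ∫ x in A, h x ^ k ≤ (d + k) * ∫ x in A, h x ^ (k + 1) := by
    intro k
    refine le_of_forall_mul_le_of_sSup_eq_one hsup
      (mul_nonneg (by positivity) (integral_nonneg_of_ae ?_)) ?_
    · exact (ae_restrict_mem₀ (hconc.1.nullMeasurableSet _)).mono
        fun x hx => pow_nonneg (hnn x hx) _
    rintro _ ⟨p, hp, rfl⟩
    have hp_rec := hconc.succ_mul_mul_setIntegral_pow_le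
      (hbd.measure_lt_top (μ := volume)).ne hnn hbdd hp k
    rw [hdim] at hp_rec
    linarith
  have h12 := hrec 1
  have h23 := hrec 2
  simp only [pow_one, Nat.cast_one, Nat.cast_ofNat] at h12 h23
  rw [div_mul_eq_mul_div, div_le_iff₀ (by positivity)]
  nlinarith [mul_le_mul_of_nonneg_left h23 (by positivity : (0 : ℝ) ≤ d + 1)]

/-- For a bounded convex body `A ⊂ ℝ^{d-1}` and a concave `h : A → [0,∞)` with
`sup_A h = 1`, one has `∫_A h³ ≥ (6/((d+1)(d+2))) ∫_A h`. -/
theorem lower_thin_bound (d : ℕ) (hd : 2 ≤ d)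
    (A : Set (EuclideanSpace ℝ (Fin (d - 1)))) (hconv : Convex ℝ A)
    (hbd : Bornology.IsBounded A) (hpos : 0 < volume A)
    (h : EuclideanSpace ℝ (Fin (d - 1)) → ℝ) (hconc : ConcaveOn ℝ A h)
    (hnn : ∀ x ∈ A, 0 ≤ h x) (hsup : sSup (h '' A) = 1) :
    (6 / (((d : ℝ) + 1) * ((d : ℝ) + 2))) * (∫ x in A, h x) ≤ ∫ x in A, (h x) ^ 3 :=
  lower_thin_bound_general d hd A hbd h hconc hnn hsup
end
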